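/- Let (X, δ_X) and (Y, δ_Y) be diversities such that X is separable with a dense subset D (with respect to the induced metric), and Y is complete (its induced metric space is complete). Then any isomorphism from D into Y — i.e., any map φ : D → Y with δ_Y(φ(A)) = δ_X(A) for all finite A ⊆ D — extends to a map φ̄ : X → Y with δ_Y(φ̄(A)) = δ_X(A) for all finite A ⊆ X. -/

import Mathlib

open scoped Classical

/-- A diversity on `X`: a real-valued function on finite subsets satisfying
(D1) nonnegativity with `δ A = 0 ↔ |A| ≤ 1`, and (D2) the triangle inequality. -/
structure Diversity (X : Type*) where
  δ : Finset X → ℝ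
  nonneg : ∀ A : Finset X, 0 ≤ δ A
  eq_zero_iff : ∀ A : Finset X, δ A = 0 ↔ A.card ≤ 1
  triangle : ∀ A B C : Finset X, B.Nonempty → δ (A ∪ C) ≤ δ (A ∪ B) + δ (B ∪ C)

/-- An admissible function on a diversity (a one-point extension). -/
structure IsAdmissible {X : Type*} (D : Diversity X) (f : Finset X → ℝ) : Prop where
  empty : f ∅ = 0
  le : ∀ A : Finset X, D.δ A ≤ f A
  tri : ∀ A B C : Finset X, C.Nonempty → f (A ∪ B) ≤ f (A ∪ C) + D.δ (B ∪ C)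
  subadd : ∀ A B : Finset X, f (A ∪ B) ≤ f A + f B

/-- Restriction of a diversity to a subset. -/
noncomputable def Diversity.restrict {X : Type*} (D : Diversity X) (S : Set X) : Diversity S where
  δ A := D.δ (A.image Subtype.val)
  nonneg A := D.nonneg _
  eq_zero_iff A := by
    rw [D.eq_zero_iff, Finset.card_image_of_injective _ Subtype.val_injective]
  triangle A B C hB := by
    have h := D.triangle (A.image Subtype.val) (B.image Subtype.val) (C.image Subtype.val)
      (hB.image _)
    simpa [Finset.image_union] using h

/-- Separability of the induced metric `d a b = δ {a, b}`. -/
def Diversity.SeparableD {X : Type*} (D : Diversity X) : Prop :=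
  ∃ s : Set X, s.Countable ∧ ∀ x : X, ∀ ε : ℝ, 0 < ε → ∃ y ∈ s, D.δ {x, y} < ε

/-- Completeness of the induced metric `d a b = δ {a, b}`. -/
def Diversity.CompleteD {X : Type*} (D : Diversity X) : Prop :=
  ∀ u : ℕ → X, (∀ ε : ℝ, 0 < ε → ∃ N : ℕ, ∀ m ≥ N, ∀ n ≥ N, D.δ {u m, u n} < ε) →
    ∃ x : X, ∀ ε : ℝ, 0 < ε → ∃ N : ℕ, ∀ n ≥ N, D.δ {u n, x} < ε

/-- The diversity `δ̂` on (finite sets of) admissible functions. -/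
noncomputable def hatδ {X : Type*} (F : Finset (Finset X → ℝ)) : ℝ :=
  if F.card ≤ 1 then 0
  else sSup { r : ℝ | ∃ j ∈ F, ∃ A : (Finset X → ℝ) → Finset X,
    r = j ((F.erase j).biUnion A) - ∑ i ∈ F.erase j, i (A i) }

/-- The canonical maximal extension `f_S^X` of an admissible function on `S ⊆ X`. -/
noncomputable def extFun {X : Type*} (D : Diversity X) (S : Set X) (f : Finset S → ℝ)
    (A : Finset X) : ℝ :=
  sInf { r : ℝ | ∃ (B : Finset S) (As : S → Finset X),
    B.biUnion As = A ∧ r = f B + ∑ b ∈ B, D.δ (insert (b : X) (As b)) }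

/-- An admissible function is finitely supported if it is the canonical extension
of an admissible function on some finite nonempty `S ⊆ X`. -/
def FinitelySupported {X : Type*} (D : Diversity X) (f : Finset X → ℝ) : Prop :=
  ∃ S : Set X, S.Finite ∧ S.Nonempty ∧ ∃ g : Finset S → ℝ,
    IsAdmissible (D.restrict S) g ∧ f = extFun D S g

/-- The extension property for a diversity. -/
def Diversity.ExtensionProp {X : Type*} (D : Diversity X) : Prop :=
  ∀ F : Finset X, ∀ f : Finset ((F : Set X)) → ℝ,
    IsAdmissible (D.restrict (F : Set X)) f →
    ∃ x : X, ∀ A : Finset ((F : Set X)), D.δ (insert x (A.image Subtype.val)) = f A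

/-- The approximate extension property for a diversity. -/
def Diversity.ApproxExtensionProp {X : Type*} (D : Diversity X) : Prop :=
  ∀ F : Finset X, ∀ f : Finset ((F : Set X)) → ℝ,
    IsAdmissible (D.restrict (F : Set X)) f →
    ∀ ε : ℝ, 0 < ε →
      ∃ x : X, ∀ A : Finset ((F : Set X)), |D.δ (insert x (A.image Subtype.val)) - f A| ≤ ε

/-- Ultrahomogeneity: isomorphisms between finite subsets extend to automorphisms. -/
def Diversity.Ultrahomogeneous {X : Type*} (D : Diversity X) : Prop :=
  ∀ (A A' : Finset X) (φ : ((A : Set X)) → ((A' : Set X))), Function.Bijective φ →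
    (∀ B : Finset ((A : Set X)),
      D.δ (B.image (fun b => (φ b : X))) = D.δ (B.image Subtype.val)) →
    ∃ Φ : X → X, Function.Bijective Φ ∧ (∀ C : Finset X, D.δ (C.image Φ) = D.δ C) ∧
      ∀ a : ((A : Set X)), Φ a = (φ a : X)

/-!
Each `x ∈ X` is the limit of a sequence in the dense set `S`; its image under `φ` is Cauchy
because `φ` preserves the induced metric, so it converges in the complete `Y`, and this limit is
`ψ x`. Moving one point of a finite set changes its diversity by at most the distance moved, so
`δ_Y(ψ A)` and `δ_X(A)` are both within `2 |A| ε` of the common value `δ_Y(φ B) = δ_X(B)`,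
where `B ⊆ S` approximates `A` pointwise to within `ε`.
-/

namespace Diversity

variable {X Y : Type*}

def TendstoD (D : Diversity X) (u : ℕ → X) (x : X) : Prop :=
  ∀ ε : ℝ, 0 < ε → ∃ N : ℕ, ∀ n ≥ N, D.δ {u n, x} < ε

def CauchyD (D : Diversity X) (u : ℕ → X) : Prop :=
  ∀ ε : ℝ, 0 < ε → ∃ N : ℕ, ∀ m ≥ N, ∀ n ≥ N, D.δ {u m, u n} < ε

def IsIso (DX : Diversity X) (DY : Diversity Y) (f : X → Y) : Prop :=
  ∀ A : Finset X, DY.δ (A.image f) = DX.δ A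

section Basic

variable (D : Diversity X)

@[simp]
lemma δ_singleton (x : X) : D.δ {x} = 0 := by
  simp [D.eq_zero_iff]

@[simp]
lemma restrict_δ (S : Set X) (A : Finset S) : (D.restrict S).δ A = D.δ (A.image (↑)) :=
  rfl

lemma δ_insert_le (a b : X) (C : Finset X) :
    D.δ (insert a C) ≤ D.δ {a, b} + D.δ (insert b C) := by
  simpa only [← Finset.insert_eq] using D.triangle {a} {b} C (Finset.singleton_nonempty b)

lemma δ_pair_le (a b c : X) : D.δ {a, c} ≤ D.δ {a, b} + D.δ {b, c} :=
  D.δ_insert_le a b {c}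

lemma δ_pair_comm (a b : X) : D.δ {a, b} = D.δ {b, a} := by
  rw [Finset.pair_comm]

lemma δ_union_image_le {α : Type*} (f g : α → X) (A : Finset α) (B : Finset X) :
    D.δ (B ∪ A.image f) ≤ D.δ (B ∪ A.image g) + ∑ a ∈ A, D.δ {f a, g a} := by
  induction A using Finset.induction generalizing B with
  | empty => simp
  | @insert a A ha ih =>
    simp only [Finset.image_insert, Finset.union_insert, Finset.sum_insert ha]
    have hmove := D.δ_insert_le (f a) (g a) (B ∪ A.image f)
    have hrest := ih (insert (g a) B)
    rw [Finset.insert_union, Finset.insert_union] at hrest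
    linarith

lemma abs_δ_image_sub_le {α : Type*} (f g : α → X) (A : Finset α) :
    |D.δ (A.image f) - D.δ (A.image g)| ≤ ∑ a ∈ A, D.δ {f a, g a} := by
  have hfg := D.δ_union_image_le f g A ∅
  have hgf := D.δ_union_image_le g f A ∅
  simp only [Finset.empty_union, D.δ_pair_comm (g _)] at hfg hgf
  exact abs_sub_le_iff.2 ⟨by linarith, by linarith⟩

lemma abs_δ_image_sub_le_card_mul {α : Type*} {f g : α → X} {A : Finset α} {ε : ℝ}
    (h : ∀ a ∈ A, D.δ {f a, g a} ≤ ε) :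
    |D.δ (A.image f) - D.δ (A.image g)| ≤ A.card * ε :=
  (D.abs_δ_image_sub_le f g A).trans <| by
    simpa only [nsmul_eq_mul] using Finset.sum_le_card_nsmul A _ ε h

lemma exists_seq_tendstoD {S : Set X}
    (hdense : ∀ x : X, ∀ ε : ℝ, 0 < ε → ∃ y ∈ S, D.δ {x, y} < ε) (x : X) :
    ∃ u : ℕ → S, D.TendstoD (fun n => (u n : X)) x := by
  choose u huS hu using fun n : ℕ => hdense x (1 / (n + 1)) Nat.one_div_pos_of_nat
  refine ⟨fun n => ⟨u n, huS n⟩, fun ε hε => ?_⟩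
  obtain ⟨N, hN⟩ := exists_nat_one_div_lt hε
  refine ⟨N, fun n hn => ?_⟩
  rw [D.δ_pair_comm]
  exact (hu n).trans_le (Nat.one_div_le_one_div hn) |>.trans hN

end Basic

lemma TendstoD.cauchyD {D : Diversity X} {u : ℕ → X} {x : X} (h : D.TendstoD u x) :
    D.CauchyD u := by
  intro ε hε
  obtain ⟨N, hN⟩ := h (ε / 2) (half_pos hε)
  refine ⟨N, fun m hm n hn => ?_⟩
  have hmn := D.δ_pair_le (u m) x (u n)
  have hm' := hN m hm
  have hn' := hN n hn
  rw [D.δ_pair_comm x] at hmn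
  linarith

lemma IsIso.δ_pair {DX : Diversity X} {DY : Diversity Y} {f : X → Y} (hf : DX.IsIso DY f)
    (a b : X) : DY.δ {f a, f b} = DX.δ {a, b} := by
  simpa using hf {a, b}

end Diversity

open Diversity

section Extension

variable {X Y : Type*} {DX : Diversity X} {DY : Diversity Y} {S : Set X} {φ : S → Y}

lemma exists_approx_limit (hdense : ∀ x : X, ∀ ε : ℝ, 0 < ε → ∃ y ∈ S, DX.δ {x, y} < ε)
    (hYc : DY.CompleteD) (hφ : (DX.restrict S).IsIso DY φ) (x : X) :
    ∃ y : Y, ∀ ε : ℝ, 0 < ε → ∃ s : S, DX.δ {(s : X), x} < ε ∧ DY.δ {φ s, y} < ε := by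
  obtain ⟨u, hu⟩ := DX.exists_seq_tendstoD hdense x
  have hφu : DY.CauchyD (fun n => φ (u n)) := by
    intro ε hε
    simpa only [hφ.δ_pair, restrict_δ, Finset.image_insert, Finset.image_singleton]
      using hu.cauchyD ε hε
  obtain ⟨y, hy⟩ := hYc _ hφu
  refine ⟨y, fun ε hε => ?_⟩
  obtain ⟨N₁, hN₁⟩ := hu ε hε
  obtain ⟨N₂, hN₂⟩ := hy ε hε
  exact ⟨u (max N₁ N₂), hN₁ _ (le_max_left _ _), hN₂ _ (le_max_right _ _)⟩

lemma isIso_of_approx (hφ : (DX.restrict S).IsIso DY φ) {ψ : X → Y}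
    (happrox : ∀ x : X, ∀ ε : ℝ, 0 < ε → ∃ s : S, DX.δ {(s : X), x} < ε ∧ DY.δ {φ s, ψ x} < ε) :
    DX.IsIso DY ψ := by
  intro A
  refine eq_of_forall_dist_le fun ε hε => ?_
  set η := ε / (2 * (A.card + 1))
  choose σ hσX hσY using fun x => happrox x η (by positivity)
  have hσ : DY.δ (A.image (φ ∘ σ)) = DX.δ (A.image ((↑) ∘ σ)) := by
    simpa only [restrict_δ, Finset.image_image] using hφ (A.image σ)
  have hY : |DY.δ (A.image (φ ∘ σ)) - DY.δ (A.image ψ)| ≤ A.card * η :=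
    DY.abs_δ_image_sub_le_card_mul fun a _ => (hσY a).le
  have hX : |DX.δ (A.image ((↑) ∘ σ)) - DX.δ (A.image id)| ≤ A.card * η :=
    DX.abs_δ_image_sub_le_card_mul fun a _ => (hσX a).le
  rw [Finset.image_id] at hX
  have hη : η * (2 * (A.card + 1)) = ε := div_mul_cancel₀ ε (by positivity)
  have hη₀ : 0 < η := by positivity
  rw [abs_le] at hX hY
  rw [Real.dist_eq, abs_le]
  constructor <;> linarith

end Extension

theorem stmt9_general {X Y : Type*} (DX : Diversity X) (DY : Diversity Y)
    (S : Set X)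
    (hdense : ∀ x : X, ∀ ε : ℝ, 0 < ε → ∃ y ∈ S, DX.δ {x, y} < ε)
    (hYc : DY.CompleteD)
    (φ : S → Y)
    (hφ : ∀ A : Finset S, DY.δ (A.image φ) = DX.δ (A.image Subtype.val)) :
    ∃ ψ : X → Y, (∀ A : Finset X, DY.δ (A.image ψ) = DX.δ A) ∧ ∀ d : S, ψ d = φ d := by
  have hφ' : (DX.restrict S).IsIso DY φ := hφ
  choose lim hlim using exists_approx_limit hdense hYc hφ'
  let ψ : X → Y := fun x => if hx : x ∈ S then φ ⟨x, hx⟩ else lim x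
  refine ⟨ψ, isIso_of_approx hφ' fun x ε hε => ?_, fun d => dif_pos d.2⟩
  by_cases hx : x ∈ S
  · exact ⟨⟨x, hx⟩, by simpa using hε, by simpa [ψ, hx] using hε⟩
  · simpa [ψ, hx] using hlim x ε hε

/-- An isomorphism from a countable dense subset of a separable diversity into a
complete diversity extends to an isomorphism of the whole space. -/
theorem stmt9 {X Y : Type*} (DX : Diversity X) (DY : Diversity Y)
    (S : Set X) (hcount : S.Countable)
    (hdense : ∀ x : X, ∀ ε : ℝ, 0 < ε → ∃ y ∈ S, DX.δ {x, y} < ε)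
    (hYc : DY.CompleteD)
    (φ : S → Y)
    (hφ : ∀ A : Finset S, DY.δ (A.image φ) = DX.δ (A.image Subtype.val)) :
    ∃ ψ : X → Y, (∀ A : Finset X, DY.δ (A.image ψ) = DX.δ A) ∧ ∀ d : S, ψ d = φ d :=
  stmt9_general DX DY S hdense hYc φ hφ
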